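/- arXiv:2511.16129 — 2 statements merged into one kernel-verified Lean document; each statement's English description precedes it below -/
import Mathlib

section
/- Let m > 1 and 1 ≤ N ≤ m, and assume (H1). If u is a radial solution on [0,R), then α = u(0) > b and u'(r) < 0 for every r ∈ (0,R). -/
/-!
The energy `E(r) = (m-1)/m |u'|^m + F(u)`, `F(t) = ∫_b^t f`, is nonincreasing along a radial
solution, since `E' = -(N-1)/r |u'|^m`. If `u'(r₀) = 0` and `u(r₀) ≤ b`, then wherever `u` drops
below `u(r₀)` we get `(m-1)/m |u'|^m ≤ F(u(r₀)) - F(u) ≤ 0`, because `F` decreases on `(0, b]`;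
so `u'` vanishes there, `u` never goes below `u(r₀) > 0`, and `u → 0` is impossible. Hence
`u > b` at every critical point, in particular `u(0) > b`. Where `u > b` the flux
`r^{N-1} φ_m(u')` is strictly decreasing, so `u' < 0` near `0`, and `u'` cannot come back to `0`
from below: at such a zero the flux vanishes while being negative just before it.
-/

open Filter Set MeasureTheory intervalIntegral

noncomputable section

/-- The half-open interval `[0, R)` inside `ℝ`, where `R : EReal` may be `∞`. -/
def domR (R : EReal) : Set ℝ := {r : ℝ | 0 ≤ r ∧ (r : EReal) < R}

/-- The filter describing `r → R⁻` inside `ℝ` (it equals `atTop` when `R = ∞`). -/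
def limR (R : EReal) : Filter ℝ := Filter.comap Real.toEReal (nhdsWithin R (Set.Iio R))

/-- Assumption (H1): `f` is continuous on `(0,∞)`, nonpositive on `(0,b]` and
positive on `(b,∞)`, with `b > 0`. -/
def H1cond (b : ℝ) (f : ℝ → ℝ) : Prop :=
  0 < b ∧ ContinuousOn f (Set.Ioi 0) ∧
    (∀ u : ℝ, 0 < u → u ≤ b → f u ≤ 0) ∧ (∀ u : ℝ, b < u → 0 < f u)

/-- `u` (with derivative `u'`) is a radial solution on `[0, R)` of
`(r^{N-1} |u'|^{m-2} u')' = - r^{N-1} f(u)`, positive, `C¹` up to the origin,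
with `u'(0) = 0` and `u, u' → 0` as `r → R`. -/
def IsRadialSolution (N : ℕ) (m : ℝ) (f : ℝ → ℝ) (R : EReal) (u u' : ℝ → ℝ) : Prop :=
  0 < R ∧
  (∀ r ∈ domR R, HasDerivWithinAt u (u' r) (domR R) r) ∧
  ContinuousOn u' (domR R) ∧
  (∀ r ∈ domR R, 0 < u r) ∧
  u' 0 = 0 ∧
  (∀ r : ℝ, 0 < r → (r : EReal) < R →
    HasDerivAt (fun s : ℝ => s ^ (N - 1) * |u' s| ^ (m - 2) * u' s)
      (-(r ^ (N - 1) * f (u r))) r) ∧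
  Filter.Tendsto u (limR R) (nhds 0) ∧
  Filter.Tendsto u' (limR R) (nhds 0)

/-- `rr` is the (strictly decreasing) inverse on `(0, α)` of a radial solution `u`,
with derivatives `rr'`, `rr''`, satisfying the transformed ODE
`(m-1) r'' = (N-1) r'²/r + f(u) |r'|^m r'`. -/
def IsInvSol (N : ℕ) (m α : ℝ) (f : ℝ → ℝ) (R : EReal) (u rr rr' rr'' : ℝ → ℝ) : Prop :=
  (∀ v ∈ Set.Ioo 0 α,
    0 < rr v ∧ (rr v : EReal) < R ∧ u (rr v) = v ∧
    HasDerivAt rr (rr' v) v ∧ rr' v < 0 ∧ HasDerivAt rr' (rr'' v) v ∧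
    (m - 1) * rr'' v = ((N : ℝ) - 1) * (rr' v) ^ 2 / rr v + f v * |rr' v| ^ m * rr' v) ∧
  (∀ x : ℝ, 0 < x → (x : EReal) < R → ∃ v ∈ Set.Ioo 0 α, rr v = x)

/-- The function `ω(u) = r(u)^{N-1} / (r'(u) |r'(u)|^{m-2})`. -/
def omegaF (N : ℕ) (m : ℝ) (rr rr' : ℝ → ℝ) (v : ℝ) : ℝ :=
  rr v ^ (N - 1) / (rr' v * |rr' v| ^ (m - 2))

/-- The function `P(u) = a u ω(u) + r(u)^N ((m-1)/m · 1/|r'(u)|^m + (a/N) u f(u))`. -/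
def PF (N : ℕ) (m a : ℝ) (f rr rr' : ℝ → ℝ) (v : ℝ) : ℝ :=
  a * v * omegaF N m rr rr' v +
    rr v ^ N * ((m - 1) / m * (1 / |rr' v| ^ m) + a / (N : ℝ) * v * f v)

open Topology

/-- The `m`-Laplacian nonlinearity `φ_m`. -/
def phiM (m y : ℝ) : ℝ := |y| ^ (m - 2) * y

def radialFlux (k : ℕ) (m : ℝ) (u' : ℝ → ℝ) (r : ℝ) : ℝ := r ^ k * |u' r| ^ (m - 2) * u' r

def radialEnergy (m b : ℝ) (f u u' : ℝ → ℝ) (r : ℝ) : ℝ :=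
  (m - 1) / m * |u' r| ^ m + ∫ t in b..u r, f t

section phiM

variable {m : ℝ}

@[simp]
lemma phiM_zero (m : ℝ) : phiM m 0 = 0 := mul_zero _

lemma abs_phiM (hm : m ≠ 1) (y : ℝ) : |phiM m y| = |y| ^ (m - 1) := by
  rw [phiM, abs_mul, abs_of_nonneg (Real.rpow_nonneg (abs_nonneg y) _),
    ← Real.rpow_add_one' (abs_nonneg y) (by contrapose! hm; linarith)]
  ring_nf

lemma abs_phiM_rpow (hm : 1 < m) (y : ℝ) : |phiM m y| ^ (m / (m - 1)) = |y| ^ m := by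
  rw [abs_phiM hm.ne', ← Real.rpow_mul (abs_nonneg y), mul_div_cancel₀ _ (by linarith)]

lemma abs_phiM_rpow_mul_phiM (hm : 1 < m) (y : ℝ) :
    |phiM m y| ^ (m / (m - 1) - 2) * phiM m y = y := by
  rcases eq_or_ne y 0 with rfl | hy
  · simp
  have hexp : (m - 1) * (m / (m - 1) - 2) + (m - 2) = 0 := by
    field_simp [(by linarith : m - 1 ≠ 0)]
    ring
  rw [abs_phiM hm.ne', ← Real.rpow_mul (abs_nonneg y), phiM, ← mul_assoc,
    ← Real.rpow_add (abs_pos.2 hy), hexp, Real.rpow_zero, one_mul]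

lemma mul_phiM (hm : m ≠ 0) (y : ℝ) : y * phiM m y = |y| ^ m := by
  rw [phiM, show y * (|y| ^ (m - 2) * y) = |y| ^ (m - 2) * |y| ^ (2 : ℝ) by
      rw [Real.rpow_two, sq_abs]; ring,
    ← Real.rpow_add' (abs_nonneg y) (by simpa using hm), sub_add_cancel]

lemma phiM_neg_iff {y : ℝ} : phiM m y < 0 ↔ y < 0 := by
  refine ⟨fun h => ?_, fun h => mul_neg_of_pos_of_neg (Real.rpow_pos_of_pos (abs_pos.2 h.ne) _) h⟩
  by_contra! hy
  exact h.not_ge (mul_nonneg (Real.rpow_nonneg (abs_nonneg y) _) hy)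

/-- `φ_m` is `1/m` times the derivative of the `C¹` function `|y|^m`. -/
lemma continuous_phiM (hm : 1 < m) : Continuous (phiM m) := by
  have hderiv : phiM m = fun y => m⁻¹ * deriv (fun x : ℝ => |x| ^ m) y := by
    ext y
    rw [(hasDerivAt_abs_rpow y hm).deriv, phiM]
    field_simp [(by linarith : m ≠ 0)]
  rw [hderiv]
  exact continuous_const.mul ((contDiff_norm_rpow (E := ℝ) hm).continuous_deriv le_rfl)

end phiM

lemma radialFlux_eq (k : ℕ) (m : ℝ) (u' : ℝ → ℝ) (r : ℝ) :
    radialFlux k m u' r = r ^ k * phiM m (u' r) :=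
  mul_assoc _ _ _

lemma radialFlux_eq_zero {k : ℕ} {m r : ℝ} {u' : ℝ → ℝ} (h : u' r = 0) :
    radialFlux k m u' r = 0 := by
  rw [radialFlux, h, mul_zero]

lemma radialFlux_neg_iff {k : ℕ} {m r : ℝ} {u' : ℝ → ℝ} (hr : 0 < r) :
    radialFlux k m u' r < 0 ↔ u' r < 0 := by
  rw [radialFlux_eq]
  exact ⟨fun h => phiM_neg_iff.1 (neg_of_mul_neg_right h (pow_pos hr k).le),
    fun h => mul_neg_of_pos_of_neg (pow_pos hr k) (phiM_neg_iff.2 h)⟩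

section domR

variable {R : EReal}

lemma Icc_subset_domR {a c : ℝ} (ha : 0 ≤ a) (hc : c ∈ domR R) : Icc a c ⊆ domR R :=
  fun _ hx => ⟨ha.trans hx.1, (EReal.coe_le_coe_iff.2 hx.2).trans_lt hc.2⟩

lemma domR_mem_nhds {x : ℝ} (hx : 0 < x) (hxR : (x : EReal) < R) : domR R ∈ 𝓝 x := by
  obtain ⟨y, hxy, hyR⟩ := EReal.exists_between_coe_real hxR
  exact mem_of_superset (Ioo_mem_nhds hx (EReal.coe_lt_coe_iff.1 hxy))
    fun z hz => ⟨hz.1.le, (EReal.coe_lt_coe_iff.2 hz.2).trans hyR⟩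

lemma domR_mem_nhdsGE {x : ℝ} (hx : x ∈ domR R) : domR R ∈ 𝓝[≥] x := by
  obtain ⟨y, hxy, hyR⟩ := EReal.exists_between_coe_real hx.2
  exact mem_of_superset (Ico_mem_nhdsGE (EReal.coe_lt_coe_iff.1 hxy))
    fun z hz => ⟨hx.1.trans hz.1, (EReal.coe_lt_coe_iff.2 hz.2).trans hyR⟩

lemma limR_neBot (hR : 0 < R) : (limR R).NeBot := by
  refine comap_neBot fun t ht => ?_
  obtain ⟨V, hV, hVt⟩ := mem_nhdsWithin_iff_exists_mem_nhds_inter.1 ht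
  obtain ⟨l, hlR, hsub⟩ := exists_Ioc_subset_of_mem_nhds hV ⟨0, hR⟩
  obtain ⟨y, hy1, hy2⟩ := EReal.exists_between_coe_real (max_lt hlR hR : max l 0 < R)
  exact ⟨y, hVt ⟨hsub ⟨(le_max_left l 0).trans_lt hy1, hy2.le⟩, hy2⟩⟩

lemma eventually_limR_mem_domR {a : ℝ} (ha : a ∈ domR R) :
    ∀ᶠ r in limR R, r ∈ domR R ∧ a < r := by
  have hmem : Ioi (a : EReal) ∩ Iio R ∈ 𝓝[<] R :=
    inter_mem (mem_nhdsWithin_of_mem_nhds (Ioi_mem_nhds ha.2)) self_mem_nhdsWithin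
  filter_upwards [preimage_mem_comap hmem] with r hr
  have har : a < r := EReal.coe_lt_coe_iff.1 hr.1
  exact ⟨⟨ha.1.trans har.le, hr.2⟩, har⟩

end domR

lemma le_of_hasDerivAt_eq_zero_of_lt {u u' : ℝ → ℝ} {a c : ℝ} (hac : a ≤ c)
    (hu : ContinuousOn u (Icc a c)) (hu' : ∀ x ∈ Ioo a c, HasDerivAt u (u' x) x)
    (hflat : ∀ x ∈ Ioo a c, u x < u a → u' x = 0) : u a ≤ u c := by
  by_contra! hca
  set S := Icc a c ∩ u ⁻¹' Ici (u a)
  have hS : IsCompact S :=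
    isCompact_Icc.of_isClosed_subset (hu.preimage_isClosed_of_isClosed isClosed_Icc isClosed_Ici)
      inter_subset_left
  have hT : sSup S ∈ S := hS.sSup_mem ⟨a, left_mem_Icc.2 hac, mem_preimage.2 self_mem_Ici⟩
  have hTc : sSup S < c := hT.1.2.lt_of_ne fun h => (h ▸ hT.2 : u a ≤ u c).not_gt hca
  obtain ⟨ξ, hξ, hslope⟩ := exists_hasDerivAt_eq_slope u u' hTc
    (hu.mono (Icc_subset_Icc_left hT.1.1)) fun x hx => hu' x ⟨hT.1.1.trans_lt hx.1, hx.2⟩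
  have hξc : ξ ∈ Ioo a c := ⟨hT.1.1.trans_lt hξ.1, hξ.2⟩
  have hξ_below : u ξ < u a :=
    not_le.1 fun h => (le_csSup hS.bddAbove ⟨Ioo_subset_Icc_self hξc, h⟩).not_gt hξ.1
  rw [hflat ξ hξc hξ_below, eq_comm, div_eq_zero_iff, sub_eq_zero, sub_eq_zero] at hslope
  rcases hslope with h | h
  · exact (h ▸ hT.2 : u a ≤ u c).not_gt hca
  · exact hTc.ne' h

lemma exists_first_zero {g : ℝ → ℝ} {a c : ℝ} (hac : a ≤ c) (hg : ContinuousOn g (Icc a c))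
    (ha : g a < 0) (hc : 0 ≤ g c) : ∃ ρ ∈ Ioc a c, g ρ = 0 ∧ ∀ x ∈ Ico a ρ, g x < 0 := by
  set S := Icc a c ∩ g ⁻¹' Ici 0
  have hS : IsCompact S :=
    isCompact_Icc.of_isClosed_subset (hg.preimage_isClosed_of_isClosed isClosed_Icc isClosed_Ici)
      inter_subset_left
  have hρ : sInf S ∈ S := hS.sInf_mem ⟨c, right_mem_Icc.2 hac, hc⟩
  have hbefore : ∀ x ∈ Ico a (sInf S), g x < 0 := fun x hx =>
    not_le.1 fun h => (csInf_le hS.bddBelow ⟨⟨hx.1, hx.2.le.trans hρ.1.2⟩, h⟩).not_gt hx.2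
  have haρ : a < sInf S := hρ.1.1.lt_of_ne fun h => (h ▸ hρ.2 : 0 ≤ g a).not_gt ha
  obtain ⟨z, hz, hgz⟩ := intermediate_value_Icc haρ.le (hg.mono (Icc_subset_Icc_right hρ.1.2))
    ⟨ha.le, hρ.2⟩
  obtain rfl : z = sInf S := hz.2.eq_of_not_lt fun h => (hbefore z ⟨hz.1, h⟩).ne hgz
  exact ⟨_, ⟨haρ, hρ.1.2⟩, hgz, hbefore⟩

section primitive

variable {f : ℝ → ℝ} {b : ℝ}

lemma hasDerivAt_integral_of_continuousOn_Ioi (hf : ContinuousOn f (Ioi 0)) (hb : 0 < b)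
    {t : ℝ} (ht : 0 < t) : HasDerivAt (fun t => ∫ s in b..t, f s) (f t) t :=
  integral_hasDerivAt_right
    ((hf.mono fun _ hz => (lt_min hb ht).trans_le hz.1).intervalIntegrable)
    (hf.stronglyMeasurableAtFilter isOpen_Ioi t ht) (hf.continuousAt (Ioi_mem_nhds ht))

lemma antitoneOn_integral_of_nonpos (hf : ContinuousOn f (Ioi 0)) (hb : 0 < b)
    (hneg : ∀ y, 0 < y → y ≤ b → f y ≤ 0) : AntitoneOn (fun t => ∫ s in b..t, f s) (Ioc 0 b) := by
  refine antitoneOn_of_hasDerivWithinAt_nonpos (f' := f) (convex_Ioc 0 b)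
    (fun t ht => (hasDerivAt_integral_of_continuousOn_Ioi hf hb ht.1).continuousAt
      |>.continuousWithinAt) (fun t ht => ?_) fun t ht => ?_
  all_goals rw [interior_Ioc] at ht
  · exact (hasDerivAt_integral_of_continuousOn_Ioi hf hb ht.1).hasDerivWithinAt
  · exact hneg t ht.1 ht.2.le

end primitive

theorem hasDerivAt_radialEnergy {k : ℕ} {m b r : ℝ} {f u u' : ℝ → ℝ} (hm : 1 < m) (hb : 0 < b)
    (hf : ContinuousOn f (Ioi 0)) (hr : 0 < r) (hu : HasDerivAt u (u' r) r) (hur : 0 < u r)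
    (hflux : HasDerivAt (radialFlux k m u') (-(r ^ k * f (u r))) r) :
    HasDerivAt (radialEnergy m b f u u') (-(k / r * |u' r| ^ m)) r := by
  set p := m / (m - 1) with hp_def
  have hp : 1 < p := by rw [lt_div_iff₀ (by linarith)]; linarith
  -- `u'` need not be differentiable, but `φ_m(u') = flux / r^k` is.
  have hφ : HasDerivAt (fun s => radialFlux k m u' s / s ^ k)
      (-f (u r) - k / r * phiM m (u' r)) r := by
    refine (hflux.div (hasDerivAt_pow k r) (pow_ne_zero k hr.ne')).congr_deriv ?_
    rw [radialFlux_eq]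
    rcases eq_or_ne k 0 with rfl | hk
    · simp
    · rw [← mul_pow_sub_one hk r]
      field_simp
  have hE := (((hasDerivAt_abs_rpow _ hp).comp r hφ).const_mul ((m - 1) / m)).add
    ((hasDerivAt_integral_of_continuousOn_Ioi hf hb hur).comp r hu)
  have heq : radialEnergy m b f u u' =ᶠ[𝓝 r]
      fun s => (m - 1) / m * |radialFlux k m u' s / s ^ k| ^ p + ∫ t in b..u s, f t := by
    filter_upwards [Ioi_mem_nhds hr] with s hs
    rw [radialEnergy, radialFlux_eq, mul_div_cancel_left₀ _ (pow_ne_zero k (ne_of_gt hs)),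
      abs_phiM_rpow hm]
  refine (hE.congr_of_eventuallyEq heq).congr_deriv ?_
  rw [radialFlux_eq, mul_div_cancel_left₀ _ (pow_ne_zero k hr.ne'), mul_assoc p,
    abs_phiM_rpow_mul_phiM hm, ← mul_phiM (by linarith) (u' r), hp_def]
  field_simp [(by linarith : m - 1 ≠ 0)]
  ring

namespace IsRadialSolution

variable {N : ℕ} {m b : ℝ} {f : ℝ → ℝ} {R : EReal} {u u' : ℝ → ℝ}

lemma pos (hu : IsRadialSolution N m f R u u') {r : ℝ} (hr : r ∈ domR R) : 0 < u r :=
  hu.2.2.2.1 r hr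

lemma continuousOn (hu : IsRadialSolution N m f R u u') : ContinuousOn u (domR R) :=
  fun r hr => (hu.2.1 r hr).continuousWithinAt

lemma continuousOn_deriv (hu : IsRadialSolution N m f R u u') : ContinuousOn u' (domR R) :=
  hu.2.2.1

lemma hasDerivAt (hu : IsRadialSolution N m f R u u') {r : ℝ} (hr : 0 < r)
    (hrR : (r : EReal) < R) : HasDerivAt u (u' r) r :=
  (hu.2.1 r ⟨hr.le, hrR⟩).hasDerivAt (domR_mem_nhds hr hrR)

lemma hasDerivAt_radialFlux (hu : IsRadialSolution N m f R u u') {r : ℝ} (hr : 0 < r)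
    (hrR : (r : EReal) < R) : HasDerivAt (radialFlux (N - 1) m u') (-(r ^ (N - 1) * f (u r))) r :=
  hu.2.2.2.2.2.1 r hr hrR

lemma continuousOn_radialFlux (hu : IsRadialSolution N m f R u u') (hm : 1 < m) :
    ContinuousOn (radialFlux (N - 1) m u') (domR R) := by
  simp_rw [funext (radialFlux_eq (N - 1) m u')]
  exact (continuous_pow _).continuousOn.mul ((continuous_phiM hm).comp_continuousOn
    hu.continuousOn_deriv)

lemma antitoneOn_radialEnergy (hu : IsRadialSolution N m f R u u') (hm : 1 < m) (hb : 0 < b)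
    (hf : ContinuousOn f (Ioi 0)) {a c : ℝ} (ha : 0 ≤ a) (hc : c ∈ domR R) :
    AntitoneOn (radialEnergy m b f u u') (Icc a c) := by
  have hsub := Icc_subset_domR ha hc
  have hcont : ContinuousOn (radialEnergy m b f u u') (Icc a c) := fun x hx =>
    (((hu.continuousOn_deriv x (hsub hx)).abs.rpow_const (Or.inr (by linarith))).const_mul _).add
      ((hasDerivAt_integral_of_continuousOn_Ioi hf hb (hu.pos (hsub hx))).continuousAt
        |>.comp_continuousWithinAt (hu.continuousOn x (hsub hx))) |>.mono hsub
  refine antitoneOn_of_hasDerivWithinAt_nonpos (f' := fun x => -((N - 1 : ℕ) / x * |u' x| ^ m))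
    (convex_Icc a c) hcont (fun x hx => ?_) fun x hx => ?_
  all_goals
    rw [interior_Icc] at hx
    have hx0 : 0 < x := ha.trans_lt hx.1
    have hxR : (x : EReal) < R := (hsub (Ioo_subset_Icc_self hx)).2
  · exact (hasDerivAt_radialEnergy hm hb hf hx0 (hu.hasDerivAt hx0 hxR) (hu.pos ⟨hx0.le, hxR⟩)
      (hu.hasDerivAt_radialFlux hx0 hxR)).hasDerivWithinAt
  · exact neg_nonpos.2 (by positivity)

lemma deriv_zero (hu : IsRadialSolution N m f R u u') : u' 0 = 0 :=
  hu.2.2.2.2.1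

lemma tendsto_limR (hu : IsRadialSolution N m f R u u') : Tendsto u (limR R) (𝓝 0) :=
  hu.2.2.2.2.2.2.1

lemma zero_mem_domR (hu : IsRadialSolution N m f R u u') : (0 : ℝ) ∈ domR R :=
  ⟨le_rfl, by exact_mod_cast hu.1⟩

theorem lt_of_deriv_eq_zero (hu : IsRadialSolution N m f R u u') (hm : 1 < m) (hf : H1cond b f)
    {r₀ : ℝ} (hr₀ : r₀ ∈ domR R) (hu'r₀ : u' r₀ = 0) : b < u r₀ := by
  obtain ⟨hb, hfc, hfneg, -⟩ := hf
  by_contra! hle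
  have hflat : ∀ r ∈ domR R, r₀ ≤ r → u r < u r₀ → u' r = 0 := by
    intro r hr hr₀r hlt
    have hE := hu.antitoneOn_radialEnergy hm hb hfc hr₀.1 hr (left_mem_Icc.2 hr₀r)
      (right_mem_Icc.2 hr₀r) hr₀r
    have hF := antitoneOn_integral_of_nonpos hfc hb hfneg ⟨hu.pos hr, hlt.le.trans hle⟩
      ⟨hu.pos hr₀, hle⟩ hlt.le
    simp only [radialEnergy, hu'r₀, abs_zero, Real.zero_rpow (by linarith : m ≠ 0),
      mul_zero, zero_add] at hE
    have hpow : |u' r| ^ m ≤ 0 := by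
      have : 0 < (m - 1) / m := div_pos (by linarith) (by linarith)
      nlinarith
    exact abs_eq_zero.1 ((Real.rpow_eq_zero (abs_nonneg _) (by linarith)).1
      (hpow.antisymm (by positivity)))
  have hge : ∀ r ∈ domR R, r₀ < r → u r₀ ≤ u r := fun r hr hr₀r =>
    le_of_hasDerivAt_eq_zero_of_lt hr₀r.le (hu.continuousOn.mono (Icc_subset_domR hr₀.1 hr))
      (fun x hx => hu.hasDerivAt (hr₀.1.trans_lt hx.1) (Icc_subset_domR hr₀.1 hr
        (Ioo_subset_Icc_self hx)).2)
      fun x hx => hflat x (Icc_subset_domR hr₀.1 hr (Ioo_subset_Icc_self hx)) hx.1.le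
  have := limR_neBot hu.1
  have hle0 : u r₀ ≤ 0 := ge_of_tendsto hu.tendsto_limR <|
    (eventually_limR_mem_domR hr₀).mono fun r hr => hge r hr.1 hr.2
  exact (hu.pos hr₀).not_ge hle0

lemma strictAntiOn_radialFlux (hu : IsRadialSolution N m f R u u') (hm : 1 < m)
    (hfpos : ∀ t, b < t → 0 < f t) {a c : ℝ} (hsub : Icc a c ⊆ domR R)
    (hbu : ∀ x ∈ Icc a c, b < u x) : StrictAntiOn (radialFlux (N - 1) m u') (Icc a c) := by
  refine strictAntiOn_of_hasDerivWithinAt_neg (f' := fun x => -(x ^ (N - 1) * f (u x)))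
    (convex_Icc a c) ((hu.continuousOn_radialFlux hm).mono hsub) (fun x hx => ?_) fun x hx => ?_
  all_goals
    rw [interior_Icc] at hx
    have hx0 : 0 < x := (hsub (left_mem_Icc.2 (hx.1.trans hx.2).le)).1.trans_lt hx.1
  · exact (hu.hasDerivAt_radialFlux hx0 (hsub (Ioo_subset_Icc_self hx)).2).hasDerivWithinAt
  · exact neg_neg_of_pos (mul_pos (pow_pos hx0 _) (hfpos _ (hbu x (Ioo_subset_Icc_self hx))))

lemma exists_deriv_neg_near_zero (hu : IsRadialSolution N m f R u u') (hm : 1 < m)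
    (hfpos : ∀ t, b < t → 0 < f t) (hu0 : b < u 0) :
    ∃ δ > 0, ∀ x ∈ Ioc 0 δ, u' x < 0 := by
  have h0 := domR_mem_nhdsGE hu.zero_mem_domR
  have hev : ∀ᶠ x in 𝓝[≥] 0, x ∈ domR R ∧ b < u x := Eventually.and h0 <|
    nhdsWithin_le_of_mem h0 (hu.continuousOn 0 hu.zero_mem_domR (Ioi_mem_nhds hu0))
  obtain ⟨δ, hδ, hsub⟩ := mem_nhdsGE_iff_exists_Icc_subset.1 hev
  refine ⟨δ, hδ, fun x hx => ?_⟩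
  have hflux := hu.strictAntiOn_radialFlux hm hfpos (fun y hy => (hsub hy).1)
    (fun y hy => (hsub hy).2) (left_mem_Icc.2 hδ.le) (Ioc_subset_Icc_self hx) hx.1
  rw [radialFlux_eq_zero hu.deriv_zero] at hflux
  exact (radialFlux_neg_iff hx.1).1 hflux

lemma deriv_ne_zero_of_neg_on_left (hu : IsRadialSolution N m f R u u') (hm : 1 < m)
    (hf : H1cond b f) {δ ρ : ℝ} (hδ : 0 ≤ δ) (hδρ : δ < ρ) (hρR : (ρ : EReal) < R)
    (hneg : ∀ x ∈ Ioo δ ρ, u' x < 0) : u' ρ ≠ 0 := by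
  intro hzero
  have hρ : 0 < ρ := hδ.trans_lt hδρ
  have hbρ := hu.lt_of_deriv_eq_zero hm hf ⟨hρ.le, hρR⟩ hzero
  have hev : ∀ᶠ x in 𝓝[≤] ρ, x ∈ domR R ∧ δ < x ∧ b < u x :=
    nhdsWithin_le_nhds <| Eventually.and (domR_mem_nhds hρ hρR) <|
      Eventually.and (Ioi_mem_nhds hδρ) <|
        (hu.continuousOn ρ ⟨hρ.le, hρR⟩).continuousAt (domR_mem_nhds hρ hρR) (Ioi_mem_nhds hbρ)
  obtain ⟨a, haρ, hsub⟩ := mem_nhdsLE_iff_exists_Icc_subset.1 hev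
  have ha := hsub (left_mem_Icc.2 haρ.le)
  have hflux := hu.strictAntiOn_radialFlux hm hf.2.2.2 (fun y hy => (hsub hy).1)
    (fun y hy => (hsub hy).2.2) (left_mem_Icc.2 haρ.le) (right_mem_Icc.2 haρ.le) haρ
  rw [radialFlux_eq_zero hzero] at hflux
  exact hflux.not_gt ((radialFlux_neg_iff (hδ.trans_lt ha.2.1)).2 (hneg a ⟨ha.2.1, haρ⟩))

end IsRadialSolution

theorem stmt2_general (N : ℕ) (m b : ℝ) (f : ℝ → ℝ) (hm : 1 < m)
    (hf : H1cond b f)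
    (R : EReal) (u u' : ℝ → ℝ) (hu : IsRadialSolution N m f R u u') :
    b < u 0 ∧ ∀ r : ℝ, 0 < r → (r : EReal) < R → u' r < 0 := by
  have hu0 : b < u 0 := hu.lt_of_deriv_eq_zero hm hf hu.zero_mem_domR hu.deriv_zero
  refine ⟨hu0, fun r hr hrR => ?_⟩
  obtain ⟨δ, hδ, hneg⟩ := hu.exists_deriv_neg_near_zero hm hf.2.2.2 hu0
  by_contra! hr'
  have hδr : δ < r := lt_of_not_ge fun h => (hneg r ⟨hr, h⟩).not_ge hr'
  have hsub := Icc_subset_domR hδ.le ⟨hr.le, hrR⟩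
  obtain ⟨ρ, hρ, hρ0, hbefore⟩ := exists_first_zero hδr.le (hu.continuousOn_deriv.mono hsub)
    (hneg δ ⟨hδ, le_rfl⟩) hr'
  exact hu.deriv_ne_zero_of_neg_on_left hm hf hδ.le hρ.1
    (hsub ⟨hρ.1.le, hρ.2⟩).2 (fun x hx => hbefore x (Ioo_subset_Ico_self hx)) hρ0

/-- for `m > 1`, `1 ≤ N ≤ m`, under (H1), any radial solution satisfies
`u(0) > b` and `u'(r) < 0` for all `r ∈ (0, R)`. -/
theorem stmt2 (N : ℕ) (m b : ℝ) (f : ℝ → ℝ) (hm : 1 < m)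
    (hN1 : 1 ≤ N) (hNm : (N : ℝ) ≤ m) (hf : H1cond b f)
    (R : EReal) (u u' : ℝ → ℝ) (hu : IsRadialSolution N m f R u u') :
    b < u 0 ∧ ∀ r : ℝ, 0 < r → (r : EReal) < R → u' r < 0 :=
  stmt2_general N m b f hm hf R u u' hu

end
end

section
/- Let m > 1 and 1 ≤ N ≤ m, and assume (H1). If u is a radial solution on [0,R), then r^{(N−1)/(m−1)} |u'(r)| → 0 as r → R (where R ≤ ∞). -/
open Filter Set MeasureTheory intervalIntegral

noncomputable section

open Topology

lemma limR_top : limR ⊤ = atTop := by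
  have h : Iio (⊤ : EReal) = {⊤}ᶜ := by ext x; simp [lt_top_iff_ne_top]
  rw [limR, h, EReal.nhdsWithin_top, comap_map EReal.coe_injective]

lemma limR_coe (c : ℝ) : limR c = 𝓝[<] c := by
  rw [limR, nhdsWithin, nhdsWithin, comap_inf, comap_principal, EReal.nhds_coe,
    comap_map EReal.coe_injective]
  congr 2
  ext x
  simp

lemma monotoneOn_Ici_of_hasDerivAt_nonneg {φ φ' : ℝ → ℝ} {a : ℝ}
    (hd : ∀ r ≥ a, HasDerivAt φ (φ' r) r) (hnn : ∀ r ≥ a, 0 ≤ φ' r) :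
    MonotoneOn φ (Ici a) := by
  refine monotoneOn_of_hasDerivWithinAt_nonneg (f' := φ') (convex_Ici a)
    (fun r hr => (hd r hr).continuousAt.continuousWithinAt) (fun r hr => ?_) (fun r hr => ?_)
  all_goals rw [interior_Ici] at hr
  · exact (hd r hr.le).hasDerivWithinAt
  · exact hnn r hr.le

lemma tendsto_atTop_of_div_le_deriv {w w' : ℝ → ℝ} {k : ℝ} (hk : 0 < k)
    (hd : ∀ᶠ r in atTop, HasDerivAt w (w' r) r) (hb : ∀ᶠ r in atTop, k / r ≤ w' r) :
    Tendsto w atTop atTop := by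
  obtain ⟨a, ha⟩ := eventually_atTop.1 (hd.and (hb.and (eventually_gt_atTop 0)))
  have hmono : MonotoneOn (fun r => w r - k * Real.log r) (Ici a) := by
    refine monotoneOn_Ici_of_hasDerivAt_nonneg (φ' := fun r => w' r - k * r⁻¹)
      (fun r hr => (ha r hr).1.sub ((Real.hasDerivAt_log (ha r hr).2.2.ne').const_mul k))
      (fun r hr => ?_)
    simpa [div_eq_mul_inv] using (ha r hr).2.1
  refine tendsto_atTop_mono' atTop (eventually_atTop.2 ⟨a, fun r hr => ?_⟩)
    (tendsto_atTop_add_const_left _ (w a - k * Real.log a)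
      (Real.tendsto_log_atTop.const_mul_atTop hk))
  have := hmono self_mem_Ici hr hr
  simp only at this
  linarith

def pFlux (N : ℕ) (m r x : ℝ) : ℝ := r ^ (N - 1) * |x| ^ (m - 2) * x

section pFlux

variable {N : ℕ} {m r : ℝ}

lemma pFlux_neg (x : ℝ) : pFlux N m r (-x) = -pFlux N m r x := by
  simp [pFlux]

lemma abs_pFlux_rpow (hm : 1 < m) (hN1 : 1 ≤ N) (hr : 0 ≤ r) (x : ℝ) :
    |pFlux N m r x| ^ (1 / (m - 1)) = r ^ (((N : ℝ) - 1) / (m - 1)) * |x| := by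
  have hm1 : 0 < m - 1 := by linarith
  rcases eq_or_ne x 0 with rfl | hx
  · simp [pFlux, Real.zero_rpow (inv_pos.2 hm1).ne']
  have habs : |pFlux N m r x| = r ^ ((N : ℝ) - 1) * |x| ^ (m - 1) := by
    rw [pFlux, abs_mul, abs_mul, abs_of_nonneg (pow_nonneg hr _),
      abs_of_nonneg (Real.rpow_nonneg (abs_nonneg x) _), mul_assoc,
      ← Real.rpow_add_one (abs_ne_zero.2 hx), ← Real.rpow_natCast, Nat.cast_sub hN1]
    ring_nf
  rw [habs, Real.mul_rpow (Real.rpow_nonneg hr _) (Real.rpow_nonneg (abs_nonneg x) _),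
    ← Real.rpow_mul hr, ← Real.rpow_mul (abs_nonneg x), mul_one_div, mul_one_div,
    div_self hm1.ne', Real.rpow_one]

lemma div_le_of_le_pFlux (hm : 1 < m) (hN1 : 1 ≤ N) (hNm : (N : ℝ) ≤ m) {c x : ℝ}
    (hc : 0 < c) (hr : 1 ≤ r) (h : c ≤ pFlux N m r x) : c ^ (1 / (m - 1)) / r ≤ x := by
  have hr0 : 0 < r := one_pos.trans_le hr
  have hx : 0 < x := pos_of_mul_pos_right (hc.trans_le h)
    (mul_nonneg (pow_nonneg hr0.le _) (Real.rpow_nonneg (abs_nonneg x) _))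
  rw [div_le_iff₀ hr0]
  calc c ^ (1 / (m - 1)) ≤ |pFlux N m r x| ^ (1 / (m - 1)) :=
        Real.rpow_le_rpow hc.le (h.trans (le_abs_self _)) (one_div_nonneg.2 (by linarith))
    _ = r ^ (((N : ℝ) - 1) / (m - 1)) * x := by rw [abs_pFlux_rpow hm hN1 hr0.le, abs_of_pos hx]
    _ ≤ r ^ (1 : ℝ) * x := by
        gcongr
        · rw [div_le_one (by linarith)]
          linarith
    _ = x * r := by rw [Real.rpow_one, mul_comm]

lemma tendsto_rpow_mul_abs_of_tendsto_pFlux (hm : 1 < m) (hN1 : 1 ≤ N) {v : ℝ → ℝ}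
    (h : Tendsto (fun r => pFlux N m r (v r)) atTop (𝓝 0)) :
    Tendsto (fun r => r ^ (((N : ℝ) - 1) / (m - 1)) * |v r|) atTop (𝓝 0) := by
  have hm1 : 0 < 1 / (m - 1) := one_div_pos.2 (by linarith)
  have hlim := h.abs.rpow_const (Or.inr hm1.le)
  rw [abs_zero, Real.zero_rpow hm1.ne'] at hlim
  refine hlim.congr' ?_
  filter_upwards [eventually_ge_atTop 0] with r hr
  exact abs_pFlux_rpow hm hN1 hr (v r)

lemma tendsto_atTop_of_le_pFlux (hm : 1 < m) (hN1 : 1 ≤ N) (hNm : (N : ℝ) ≤ m)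
    {w w' : ℝ → ℝ} {c : ℝ} (hc : 0 < c) (hd : ∀ᶠ r in atTop, HasDerivAt w (w' r) r)
    (hflux : ∀ᶠ r in atTop, c ≤ pFlux N m r (w' r)) : Tendsto w atTop atTop := by
  refine tendsto_atTop_of_div_le_deriv (Real.rpow_pos_of_pos hc (1 / (m - 1))) hd ?_
  filter_upwards [hflux, eventually_ge_atTop 1] with r hcr hr
  exact div_le_of_le_pFlux hm hN1 hNm hc hr hcr

end pFlux

lemma tendsto_zero_of_monotoneOn_of_frequently {g : ℝ → ℝ} {a : ℝ} (hg : MonotoneOn g (Ici a))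
    (hlt : ∀ ε > 0, ∃ᶠ r in atTop, g r < ε) (hgt : ∀ ε > 0, ∃ᶠ r in atTop, -ε < g r) :
    Tendsto g atTop (𝓝 0) := by
  refine Metric.tendsto_atTop.2 fun ε hε => ?_
  obtain ⟨r₁, hr₁, hgr₁⟩ := frequently_atTop.1 (hgt ε hε) a
  refine ⟨r₁, fun r hr => ?_⟩
  obtain ⟨r₂, hr₂, hgr₂⟩ := frequently_atTop.1 (hlt ε hε) r
  have hmem : ∀ {s}, r₁ ≤ s → s ∈ Ici a := fun hs => hr₁.trans hs
  rw [Real.dist_eq, sub_zero, abs_lt]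
  exact ⟨by linarith [hg (hmem le_rfl) (hmem hr) hr], by
    linarith [hg (hmem hr) (hmem (hr.trans hr₂)) hr₂]⟩

lemma tendsto_pFlux_zero {N : ℕ} {m : ℝ} (hm : 1 < m) (hN1 : 1 ≤ N) (hNm : (N : ℝ) ≤ m)
    {u u' F : ℝ → ℝ} (hd : ∀ r > 0, HasDerivAt u (u' r) r)
    (hflux : ∀ r > 0, HasDerivAt (fun s => pFlux N m s (u' s)) (F r) r)
    (hF : ∀ᶠ r in atTop, 0 ≤ F r) (hu : Tendsto u atTop (𝓝 0)) :
    Tendsto (fun r => pFlux N m r (u' r)) atTop (𝓝 0) := by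
  obtain ⟨a, ha⟩ := eventually_atTop.1 (hF.and (eventually_gt_atTop 0))
  have hd' : ∀ᶠ r in atTop, HasDerivAt u (u' r) r :=
    (eventually_gt_atTop 0).mono fun r hr => hd r hr
  refine tendsto_zero_of_monotoneOn_of_frequently
    (monotoneOn_Ici_of_hasDerivAt_nonneg (fun r hr => hflux r (ha r hr).2) fun r hr => (ha r hr).1)
    (fun ε hε => ?_) (fun ε hε => ?_)
  · by_contra h
    rw [not_frequently] at h
    refine not_tendsto_nhds_of_tendsto_atTop (tendsto_atTop_of_le_pFlux hm hN1 hNm hε hd' ?_) 0 hu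
    filter_upwards [h] with r hr using not_lt.1 hr
  · by_contra h
    rw [not_frequently] at h
    refine not_tendsto_nhds_of_tendsto_atTop (tendsto_atTop_of_le_pFlux hm hN1 hNm hε
      (w := fun r => -u r) (hd'.mono fun r hr => hr.neg) ?_) 0 (neg_zero (G := ℝ) ▸ hu.neg)
    filter_upwards [h] with r hr
    rw [pFlux_neg]
    linarith [not_lt.1 hr]

/-- for `m > 1`, `1 ≤ N ≤ m`, under (H1), any radial solution satisfies
`r^{(N-1)/(m-1)} |u'(r)| → 0` as `r → R` (where `R ≤ ∞`). -/
theorem stmt3 (N : ℕ) (m b : ℝ) (f : ℝ → ℝ) (hm : 1 < m)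
    (hN1 : 1 ≤ N) (hNm : (N : ℝ) ≤ m) (hf : H1cond b f)
    (R : EReal) (u u' : ℝ → ℝ) (hu : IsRadialSolution N m f R u u') :
    Filter.Tendsto (fun r : ℝ => r ^ (((N : ℝ) - 1) / (m - 1)) * |u' r|)
      (limR R) (nhds 0) := by
  obtain ⟨hR, hderiv, -, hpos, -, hODE, hu0, hu'0⟩ := hu
  induction R using EReal.rec with
  | bot => exact absurd hR (by simp)
  | coe c =>
    rw [limR_coe] at hu'0 ⊢
    simpa using ((continuousAt_id.rpow_const (Or.inl (EReal.coe_pos.1 hR).ne')).tendsto.mono_left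
      nhdsWithin_le_nhds).mul hu'0.abs
  | top =>
    rw [limR_top] at hu0 ⊢
    have hdom : Ioi 0 ⊆ domR ⊤ := fun s hs => ⟨le_of_lt hs, EReal.coe_lt_top s⟩
    refine tendsto_rpow_mul_abs_of_tendsto_pFlux hm hN1 (tendsto_pFlux_zero hm hN1 hNm
      (fun r hr => (hderiv r (hdom hr)).hasDerivAt (mem_of_superset (Ioi_mem_nhds hr) hdom))
      (fun r hr => hODE r hr (EReal.coe_lt_top r)) ?_ hu0)
    filter_upwards [hu0.eventually_lt_const hf.1, eventually_gt_atTop 0] with r hub hr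
    exact neg_nonneg.2 (mul_nonpos_of_nonneg_of_nonpos (pow_nonneg hr.le _)
      (hf.2.2.1 (u r) (hpos r (hdom hr)) hub.le))

end
end
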